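/- Let c ∈ ℂ be nonzero, let n ≥ 0, and let w₁, …, w_n, u, v ∈ ℂ be pairwise distinct. With g(u,v) = c/(u−v) and f(u,v) = (u−v+c)/(u−v), one has: Σ_{i=1}^{n} g(wᵢ,u)·g(v,wᵢ)·∏_{j≠i} f(wⱼ,wᵢ) = g(v,u)·( ∏_{j=1}^{n} f(wⱼ,u) − ∏_{j=1}^{n} f(wⱼ,v) ). -/

import Mathlib

/-!
Since `g(v,w) g(w,u) = g(v,u) (g(v,w) + g(w,u))`, each summand splits as `g(v,u)` times the
difference of the same expression at `z = u` and at `z = v`, where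
`∑ᵢ g(wᵢ,z) ∏_{j≠i} f(wⱼ,wᵢ) = ∏ⱼ f(wⱼ,z) - 1`
is the partial fraction expansion of `∏ⱼ f(wⱼ,z)` in `z`. The latter is proved by adding the
points `wⱼ` one at a time, again using only the partial fraction identity for `g`.
-/

open scoped BigOperators
open MulOpposite

noncomputable section

namespace Bethe

variable {A : Type*} [Ring A] [Algebra ℂ A]

/-- `g(u,v) = c/(u-v)` -/
def gg (c u v : ℂ) : ℂ := c / (u - v)

/-- `f(u,v) = (u-v+c)/(u-v)` -/
def ff (c u v : ℂ) : ℂ := (u - v + c) / (u - v)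

/-- `h(u,v) = (u-v+c)/c` -/
def hh (c u v : ℂ) : ℂ := (u - v + c) / c

/-- A list of parameters is admissible if its entries are pairwise distinct and
`x - y + c ≠ 0` for any two distinct entries `x`, `y`. -/
def Admissible (c : ℂ) (l : List ℂ) : Prop :=
  l.Pairwise fun x y => x ≠ y ∧ x - y + c ≠ 0 ∧ y - x + c ≠ 0

/-- `∏_{x ∈ xs} ∏_{y ∈ ys} f(x,y)` -/
def prodFF (c : ℂ) (xs ys : List ℂ) : ℂ :=
  (xs.map fun x => (ys.map fun y => ff c x y).prod).prod

/-- `∏_{x ∈ xs} ∏_{y ∈ ys} g(x,y)` -/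
def prodGG (c : ℂ) (xs ys : List ℂ) : ℂ :=
  (xs.map fun x => (ys.map fun y => gg c x y).prod).prod

/-- `∏_{x ∈ xs} ∏_{y ∈ ys} h(x,y)` -/
def prodHH (c : ℂ) (xs ys : List ℂ) : ℂ :=
  (xs.map fun x => (ys.map fun y => hh c x y).prod).prod

/-- `H(w̄) = ∏_{j>k} h(wⱼ,wₖ)` -/
def Hnorm (c : ℂ) : List ℂ → ℂ
  | [] => 1
  | x :: xs => ((xs.map fun y => hh c y x).prod) * Hnorm c xs

/-- `H(w̄*) = ∏_{j<k} h(wⱼ,wₖ)` -/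
def HnormRev (c : ℂ) : List ℂ → ℂ
  | [] => 1
  | x :: xs => ((xs.map fun y => hh c x y).prod) * HnormRev c xs

/-- product of `h` over ordered pairs of distinct positions of a list -/
def prodHHne (c : ℂ) (xs : List ℂ) : ℂ :=
  ∏ j : Fin xs.length, ∏ k : Fin xs.length,
    if j ≠ k then hh c (xs.get j) (xs.get k) else 1

/-- ordered product `T(w₁)⋯T(wₙ)` -/
def Tprod (Tij : ℂ → A) (l : List ℂ) : A := (l.map Tij).prod

/-- normalized ordered product `H(w̄)⁻¹ T(w₁)⋯T(wₙ)` -/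
def TT (c : ℂ) (Tij : ℂ → A) (l : List ℂ) : A := (Hnorm c l)⁻¹ • Tprod Tij l

/-- normalized ordered product `H(w̄*)⁻¹ T(w₁)⋯T(wₙ)` -/
def TTrev (c : ℂ) (Tij : ℂ → A) (l : List ℂ) : A := (HnormRev c l)⁻¹ • Tprod Tij l

/-- The defining (RTT) commutation relations of a super-Yangian `T`-family with
`ℤ₂`-grading `p`. -/
def IsTFam (c : ℂ) {N : ℕ} (p : Fin N → ℕ) (T : Fin N → Fin N → ℂ → A) : Prop :=
  ∀ i j k l : Fin N, ∀ z w : ℂ, z ≠ w →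
    T i j z * T k l w - ((-1 : ℂ) ^ ((p i + p j) * (p k + p l))) • (T k l w * T i j z)
      = ((-1 : ℂ) ^ (p l * (p i + p j) + p i * p j) * gg c z w) •
          (T i l z * T k j w - T i l w * T k j z)

/-- the distinguished grading of `gl(2|1)`: `[1]=[2]=0`, `[3]=1` -/
def p21 : Fin 3 → ℕ := ![0, 0, 1]

/-- the distinguished grading of `gl(1|2)`: `[1]=0`, `[2]=[3]=1` -/
def p12 : Fin 3 → ℕ := ![0, 1, 1]

/-- the sublist of `l` given by the positions in `S`, in the inherited order -/
def sel (l : List ℂ) (S : Finset (Fin l.length)) : List ℂ :=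
  (S.sort (· ≤ ·)).map l.get

/-- `λ(w̄) = ∏ⱼ λ(wⱼ)` -/
def lamP (lam2 : ℂ → ℂ) (l : List ℂ) : ℂ := (l.map lam2).prod

/-- The Izergin kernel `K_ℓ(v̄|ū)`. -/
def Kiz (c : ℂ) {ℓ : ℕ} (vs us : Fin ℓ → ℂ) : ℂ :=
  (∏ j : Fin ℓ, ∏ k : Fin ℓ, if (k : ℕ) < (j : ℕ) then gg c (vs j) (vs k) else 1) *
    (∏ j : Fin ℓ, ∏ k : Fin ℓ, if (k : ℕ) < (j : ℕ) then gg c (us k) (us j) else 1) *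
    (∏ j : Fin ℓ, ∏ k : Fin ℓ, hh c (vs j) (us k)) *
    Matrix.det (Matrix.of fun j k => gg c (vs j) (us k) / hh c (vs j) (us k))

/-- The Izergin kernel for lists of equal length (and junk value `0` otherwise). -/
def KizL (c : ℂ) (vs us : List ℂ) : ℂ :=
  if h : vs.length = us.length then
    Kiz c vs.get fun j => us.get (Fin.cast h j)
  else 0

/-- The operator `X_{a,b}(ū,v̄)` of the paper (`Y(2|1)` case). -/
def X (c : ℂ) (T : Fin 3 → Fin 3 → ℂ → A) (u v : List ℂ) : A :=
  ∑ S : Finset (Fin u.length), ∑ Q : Finset (Fin v.length),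
    if S.card = Q.card then
      (prodGG c (sel v Q) (sel u S) * prodFF c (sel u S) (sel u Sᶜ) *
          prodGG c (sel v Qᶜ) (sel v Q) * prodHHne c (sel u S)) •
        (TT c (T 0 2) (sel u S) * Tprod (T 0 1) (sel u Sᶜ) *
          TT c (T 1 2) (sel v Qᶜ) * Tprod (T 1 1) (sel v Q))
    else 0

/-- The operator `Y_{a,b}(ū,v̄)` of the paper (`Y(2|1)` case). -/
def Y (c : ℂ) (T : Fin 3 → Fin 3 → ℂ → A) (u v : List ℂ) : A :=
  ∑ S : Finset (Fin u.length), ∑ Q : Finset (Fin v.length),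
    if S.card = Q.card then
      (KizL c (sel v Q) (sel u S) * prodFF c (sel u S) (sel u Sᶜ) *
          prodGG c (sel v Qᶜ) (sel v Q)) •
        (TT c (T 0 2) (sel v Q) * TT c (T 1 2) (sel v Qᶜ) *
          Tprod (T 0 1) (sel u Sᶜ) * Tprod (T 1 1) (sel u S))
    else 0

/-- First explicit expression for the `Y(2|1)` Bethe vector (operator part,
the weights `λ₂` included as scalars). -/
def PhiA (c : ℂ) (T : Fin 3 → Fin 3 → ℂ → A) (lam2 : ℂ → ℂ) (u v : List ℂ) : A :=
  ∑ S : Finset (Fin u.length), ∑ Q : Finset (Fin v.length),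
    if S.card = Q.card then
      (prodGG c (sel v Q) (sel u S) * prodFF c (sel u S) (sel u Sᶜ) *
          prodGG c (sel v Qᶜ) (sel v Q) * prodHHne c (sel u S) * lamP lam2 (sel v Q)) •
        (TT c (T 0 2) (sel u S) * Tprod (T 0 1) (sel u Sᶜ) * TT c (T 1 2) (sel v Qᶜ))
    else 0

/-- Second explicit expression for the `Y(2|1)` Bethe vector (operator part). -/
def PhiB (c : ℂ) (T : Fin 3 → Fin 3 → ℂ → A) (lam2 : ℂ → ℂ) (u v : List ℂ) : A :=
  ∑ S : Finset (Fin u.length), ∑ Q : Finset (Fin v.length),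
    if S.card = Q.card then
      (KizL c (sel v Q) (sel u S) * prodFF c (sel u S) (sel u Sᶜ) *
          prodGG c (sel v Qᶜ) (sel v Q) * lamP lam2 (sel u S)) •
        (TT c (T 0 2) (sel v Q) * TT c (T 1 2) (sel v Qᶜ) * Tprod (T 0 1) (sel u Sᶜ))
    else 0

/-- First explicit expression for the `Y(1|2)` Bethe vector, without the overall
sign `(-1)^b` (operator part). -/
def PhiTA (c : ℂ) (T : Fin 3 → Fin 3 → ℂ → A) (lam2 : ℂ → ℂ) (u v : List ℂ) : A :=
  ∑ S : Finset (Fin u.length), ∑ Q : Finset (Fin v.length),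
    if S.card = Q.card then
      (prodGG c (sel u S) (sel v Q) * prodFF c (sel v Q) (sel v Qᶜ) *
          prodGG c (sel u Sᶜ) (sel u S) * prodHHne c (sel v Q) * lamP lam2 (sel u S)) •
        (TT c (T 0 2) (sel v Q) * Tprod (T 1 2) (sel v Qᶜ) * TT c (T 0 1) (sel u Sᶜ))
    else 0

/-- Second explicit expression for the `Y(1|2)` Bethe vector, without the overall
sign `(-1)^b` (operator part). -/
def PhiTB (c : ℂ) (T : Fin 3 → Fin 3 → ℂ → A) (lam2 : ℂ → ℂ) (u v : List ℂ) : A :=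
  ∑ S : Finset (Fin u.length), ∑ Q : Finset (Fin v.length),
    if S.card = Q.card then
      (KizL c (sel u S) (sel v Q) * prodFF c (sel v Q) (sel v Qᶜ) *
          prodGG c (sel u Sᶜ) (sel u S) * lamP lam2 (sel v Q)) •
        (TT c (T 0 2) (sel u S) * TT c (T 0 1) (sel u Sᶜ) * Tprod (T 1 2) (sel v Qᶜ))
    else 0

/-- First explicit expression for the dual `Y(2|1)` Bethe vector, without the
overall sign `(-1)^{b(b-1)/2}`.  `E` is a right `A`-module, i.e. a left
`Aᵐᵒᵖ`-module; `op X • Ωd` is `Ωd · X`. -/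
def PsiA {E : Type*} [AddCommGroup E] [Module ℂ E] [Module Aᵐᵒᵖ E]
    (c : ℂ) (T : Fin 3 → Fin 3 → ℂ → A) (lam2 : ℂ → ℂ) (u v : List ℂ) (Ωd : E) : E :=
  ∑ S : Finset (Fin u.length), ∑ Q : Finset (Fin v.length),
    if S.card = Q.card then
      (prodGG c (sel v Q) (sel u S) * prodFF c (sel u S) (sel u Sᶜ) *
          prodGG c (sel v Qᶜ) (sel v Q) * prodHHne c (sel u S) * lamP lam2 (sel v Q)) •
        (op (TTrev c (T 2 1) (sel v Qᶜ) * Tprod (T 1 0) (sel u Sᶜ) *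
              TTrev c (T 2 0) (sel u S)) • Ωd)
    else 0

/-- The dual `Y(2|1)` Bethe vector `Ψ_{a,b}(ū,v̄)`. -/
def Psi {E : Type*} [AddCommGroup E] [Module ℂ E] [Module Aᵐᵒᵖ E]
    (c : ℂ) (T : Fin 3 → Fin 3 → ℂ → A) (lam2 : ℂ → ℂ) (u v : List ℂ) (Ωd : E) : E :=
  ((-1 : ℂ) ^ (v.length * (v.length - 1) / 2)) • PsiA c T lam2 u v Ωd

/-- Second explicit expression for the dual `Y(2|1)` Bethe vector, without the
overall sign `(-1)^{b(b-1)/2}`. -/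
def PsiB {E : Type*} [AddCommGroup E] [Module ℂ E] [Module Aᵐᵒᵖ E]
    (c : ℂ) (T : Fin 3 → Fin 3 → ℂ → A) (lam2 : ℂ → ℂ) (u v : List ℂ) (Ωd : E) : E :=
  ∑ S : Finset (Fin u.length), ∑ Q : Finset (Fin v.length),
    if S.card = Q.card then
      (KizL c (sel v Q) (sel u S) * prodFF c (sel u S) (sel u Sᶜ) *
          prodGG c (sel v Qᶜ) (sel v Q) * lamP lam2 (sel u S)) •
        (op (Tprod (T 1 0) (sel u Sᶜ) * TTrev c (T 2 1) (sel v Qᶜ) *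
              TTrev c (T 2 0) (sel v Q)) • Ωd)
    else 0

section PartialFractions

variable {c : ℂ}

lemma gg_swap (c x y : ℂ) : gg c x y = -gg c y x := by
  rw [gg, gg, ← neg_sub y x, div_neg]

lemma ff_eq_one_add_gg {x y : ℂ} (h : x ≠ y) : ff c x y = 1 + gg c x y := by
  rw [ff, gg, add_div, div_self (sub_ne_zero.mpr h)]

lemma gg_mul_gg {a b d : ℂ} (hab : a ≠ b) (hbd : b ≠ d) (had : a ≠ d) :
    gg c a b * gg c b d = gg c a d * (gg c a b + gg c b d) := by
  have := sub_ne_zero.mpr hab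
  have := sub_ne_zero.mpr hbd
  have := sub_ne_zero.mpr had
  unfold gg
  field_simp
  ring

lemma gg_mul_ff {a x z : ℂ} (hax : a ≠ x) (hxz : x ≠ z) (haz : a ≠ z) :
    gg c x z * ff c a x = (1 + gg c a z) * gg c x z - gg c a z * gg c x a := by
  rw [ff_eq_one_add_gg hax, gg_swap c x a]
  linear_combination gg_mul_gg (c := c) hax hxz haz

lemma sum_gg_mul_prod_ff {ι : Type*} [DecidableEq ι] (s : Finset ι) (w : ι → ℂ)
    (hw : Set.InjOn w s) {z : ℂ} (hz : ∀ i ∈ s, w i ≠ z) :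
    ∑ i ∈ s, gg c (w i) z * ∏ j ∈ s.erase i, ff c (w j) (w i)
      = (∏ j ∈ s, ff c (w j) z) - 1 := by
  induction s using Finset.induction_on generalizing z with
  | empty => simp
  | insert a s ha ih =>
    have hws : Set.InjOn w s := hw.mono (Finset.subset_insert a s)
    have hwa : ∀ i ∈ s, w a ≠ w i := fun i hi h =>
      ha (hw (Finset.mem_insert_self a s) (Finset.mem_insert_of_mem hi) h ▸ hi)
    have hz' : ∀ i ∈ s, w i ≠ z := fun i hi => hz i (Finset.mem_insert_of_mem hi)
    have hza : w a ≠ z := hz a (Finset.mem_insert_self a s)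
    have hterm : ∀ i ∈ s,
        gg c (w i) z * ∏ j ∈ (insert a s).erase i, ff c (w j) (w i)
          = (1 + gg c (w a) z) * (gg c (w i) z * ∏ j ∈ s.erase i, ff c (w j) (w i))
            - gg c (w a) z * (gg c (w i) (w a) * ∏ j ∈ s.erase i, ff c (w j) (w i)) := by
      intro i hi
      have hai : a ≠ i := fun h => ha (h ▸ hi)
      rw [Finset.erase_insert_of_ne hai,
        Finset.prod_insert fun h => ha (Finset.mem_of_mem_erase h),
        ← mul_assoc, gg_mul_ff (hwa i hi) (hz' i hi) hza]
      ring
    rw [Finset.sum_insert ha, Finset.erase_insert ha, Finset.sum_congr rfl hterm,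
      Finset.sum_sub_distrib, ← Finset.mul_sum, ← Finset.mul_sum, ih hws hz',
      ih hws fun i hi => (hwa i hi).symm, Finset.prod_insert ha, ff_eq_one_add_gg hza]
    ring

end PartialFractions

theorem statement17_general (c : ℂ) (n : ℕ) (w : Fin n → ℂ) (u v : ℂ)
    (hww : ∀ i j : Fin n, i ≠ j → w i ≠ w j)
    (hwu : ∀ i : Fin n, w i ≠ u) (hwv : ∀ i : Fin n, w i ≠ v) (huv : u ≠ v) :
    ∑ i : Fin n,
        gg c (w i) u * gg c v (w i) *
          ∏ j : Fin n, (if j ≠ i then ff c (w j) (w i) else 1)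
      = gg c v u * ((∏ j : Fin n, ff c (w j) u) - ∏ j : Fin n, ff c (w j) v) := by
  have hinj : Function.Injective w := fun i j h => by_contra fun hij => hww i j hij h
  have hsplit : ∀ i : Fin n, gg c (w i) u * gg c v (w i)
      = gg c v u * gg c (w i) u - gg c v u * gg c (w i) v := by
    intro i
    linear_combination gg_mul_gg (c := c) (hwv i).symm (hwu i) huv.symm
      + gg c v u * gg_swap c v (w i)
  simp_rw [← Finset.prod_filter, Finset.filter_ne', hsplit, sub_mul, mul_assoc,
    Finset.sum_sub_distrib, ← Finset.mul_sum, mul_sub,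
    sum_gg_mul_prod_ff _ w hinj.injOn fun i _ => hwu i,
    sum_gg_mul_prod_ff _ w hinj.injOn fun i _ => hwv i]
  ring

/-- summation identity (6.33) of the paper. -/
theorem statement17 (c : ℂ) (hc : c ≠ 0) (n : ℕ) (w : Fin n → ℂ) (u v : ℂ)
    (hww : ∀ i j : Fin n, i ≠ j → w i ≠ w j)
    (hwu : ∀ i : Fin n, w i ≠ u) (hwv : ∀ i : Fin n, w i ≠ v) (huv : u ≠ v) :
    ∑ i : Fin n,
        gg c (w i) u * gg c v (w i) *
          ∏ j : Fin n, (if j ≠ i then ff c (w j) (w i) else 1)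
      = gg c v u * ((∏ j : Fin n, ff c (w j) u) - ∏ j : Fin n, ff c (w j) v) :=
  statement17_general c n w u v hww hwu hwv huv

end Bethe
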